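/- Define P(u)^3 using intersection numbers Ŝ^3 = -24, Ŝ^2·Ê = 6, Ŝ·Ê^2 = 12, Ê^3 = -30, Ŝ^2·G = 9, Ŝ·G^2 = -3, G^3 = 1, G^2·Ê = G·Ê^2 = Ŝ·Ê·G = 0, where P(u) = (1/3)Ê + (4/3)Ŝ + (4-u)G for u ∈ [0,2] and P(u) = (1/3)Ê + (7/3 - u/2)Ŝ + (4-u)G for u ∈ [2,4]. Then ∫_0^4 P(u)^3 du = 51, so S_X(G) = 51/22 and A_X(G)/S_X(G) = 3/(51/22) = 22/17. -/

import Mathlib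

open MeasureTheory intervalIntegral

/-- Cube of s·Ŝ + e·Ê + g·G expanded with the listed intersection numbers. -/
def cubeSEG (s e g : ℝ) : ℝ :=
  s^3*(-24) + 3*s^2*e*6 + 3*s*e^2*12 + e^3*(-30)
    + 3*s^2*g*9 + 3*s*g^2*(-3) + g^3*1
    + 3*e^2*g*0 + 3*e*g^2*0 + 6*s*e*g*0

/-!
On both pieces the integrand collapses to a cubic in `u`: it is `22 - u³` for `u ≤ 2` and
`((6 - u)³ - 8) / 4` for `u ≥ 2` (in `v = 4 - u` it is `3v + 3v²/2 + v³/4`, with no constant term).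
The two pieces agree at `u = 2`, so the integrand is continuous, and the integral splits as
`40 + 11 = 51`.
-/

/-- `vol(P(u)) = P(u)³`, the volume of the positive part of `π^*(-K_X) - u G`. -/
noncomputable def cubePositivePart (u : ℝ) : ℝ :=
  if u ≤ 2 then cubeSEG (4/3) (1/3) (4-u) else cubeSEG (7/3 - u/2) (1/3) (4-u)

lemma cubeSEG_four_thirds (u : ℝ) : cubeSEG (4/3) (1/3) (4-u) = 22 - u ^ 3 := by
  simp only [cubeSEG]; ring

lemma cubeSEG_seven_thirds_sub (u : ℝ) :
    cubeSEG (7/3 - u/2) (1/3) (4-u) = ((6 - u) ^ 3 - 8) / 4 := by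
  simp only [cubeSEG]; ring

lemma continuous_cubePositivePart : Continuous cubePositivePart := by
  refine Continuous.if_le ?_ ?_ continuous_id continuous_const fun u hu => ?_
  · simp only [cubeSEG_four_thirds]; fun_prop
  · simp only [cubeSEG_seven_thirds_sub]; fun_prop
  · simp only [hu, cubeSEG_four_thirds, cubeSEG_seven_thirds_sub]; norm_num

lemma integral_cubePositivePart_zero_two : ∫ u in (0:ℝ)..2, cubePositivePart u = 40 := by
  calc ∫ u in (0:ℝ)..2, cubePositivePart u = ∫ u in (0:ℝ)..2, (22 - u ^ 3) := by
        refine integral_congr fun u hu => ?_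
        rw [Set.uIcc_of_le zero_le_two] at hu
        simp only [cubePositivePart, if_pos hu.2, cubeSEG_four_thirds]
    _ = 40 := by
        norm_num [intervalIntegral.integral_sub, integral_pow]

lemma integral_cubePositivePart_two_four : ∫ u in (2:ℝ)..4, cubePositivePart u = 11 := by
  calc ∫ u in (2:ℝ)..4, cubePositivePart u = ∫ u in (2:ℝ)..4, ((6 - u) ^ 3 - 8) / 4 := by
        refine integral_congr fun u hu => ?_
        rw [Set.uIcc_of_le (by norm_num)] at hu
        rcases hu.1.eq_or_lt with rfl | hlt
        · simp only [cubePositivePart, le_refl, if_true, cubeSEG_four_thirds]; norm_num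
        · simp only [cubePositivePart, if_neg hlt.not_ge, cubeSEG_seven_thirds_sub]
    _ = 11 := by
        rw [intervalIntegral.integral_div, integral_comp_sub_left (fun v => v ^ 3 - 8)]
        norm_num [intervalIntegral.integral_sub, integral_pow]

lemma integral_cubePositivePart : ∫ u in (0:ℝ)..4, cubePositivePart u = 51 := by
  rw [← integral_add_adjacent_intervals (continuous_cubePositivePart.intervalIntegrable 0 2)
    (continuous_cubePositivePart.intervalIntegrable 2 4), integral_cubePositivePart_zero_two,
    integral_cubePositivePart_two_four]
  norm_num

theorem stmt_15 :
    (∫ u in (0:ℝ)..4,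
        (if u ≤ 2 then cubeSEG (4/3) (1/3) (4-u) else cubeSEG (7/3 - u/2) (1/3) (4-u))) = 51 ∧
    (3 : ℝ) / ((1/22) * ∫ u in (0:ℝ)..4,
        (if u ≤ 2 then cubeSEG (4/3) (1/3) (4-u) else cubeSEG (7/3 - u/2) (1/3) (4-u))) = 22/17 := by
  have h : ∫ u in (0:ℝ)..4, cubePositivePart u = 51 := integral_cubePositivePart
  simp only [cubePositivePart] at h
  refine ⟨h, ?_⟩
  rw [h]; norm_num
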